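/- arXiv:2306.09654 — 4 statements merged into one kernel-verified Lean document; each statement's English description precedes it below -/
import Mathlib

section
/- Let M be an Orlicz function, let p ≥ 1 be a real number, and suppose that limsup_{t→0⁺} M(t)/t^p > 0. Then there exist a constant a > 0 and a sequence (t_k)_{k∈ℕ} of positive reals with t_k → 0 such that (i) M satisfies the Δ2-condition with respect to (t_k), and (ii) liminf_{k→∞} M(t_k)/t_k^p ≥ a · limsup_{t→0⁺} M(t)/t^p, where both the limsup and the liminf are taken in the extended nonnegative reals [0,∞] (in particular, if the limsup is ∞ then M(t_k)/t_k^p → ∞). -/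
/-!
Write `φ s = M s / s ^ p`. Since `M (c s) / (c s) ^ p ≤ C φ s` means `M (c s) ≤ C c ^ p M s`,
it suffices to compare `φ (c t_k)` with `φ t_k` for large `k`; the finitely many remaining `k`
are absorbed into the constant because `M t_k > 0`.

If `ℓ = limsup φ` is finite, pick `t_k → 0` with `φ t_k > ℓ / 2`: near `0` we have `φ ≤ ℓ + 1`,
so `φ (c t_k) ≤ 2 (ℓ + 1) / ℓ · φ t_k`, and `a = 1/2`.
If `ℓ = ∞`, pick `t_k → 0` with `φ t_k = max φ` on `[t_k, 1]`; such points exist arbitrarily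
close to `0` since `φ` is continuous on `(0, 1]` and unbounded near `0`. Then
`φ (c t_k) ≤ φ t_k` as soon as `c t_k ≤ 1`, and `φ t_k → ∞`.
-/

open Filter Set Topology

def Delta2Along (M : ℝ → ℝ) (t : ℕ → ℝ) : Prop :=
  ∀ c : ℝ, 1 < c → ∃ C : ℝ, ∀ k, M (c * t k) ≤ C * M (t k)

lemma exists_forall_le_mul_of_eventually_le {f g : ℕ → ℝ} {C₀ : ℝ} (hg : ∀ k, 0 < g k)
    (h : ∀ᶠ k in atTop, f k ≤ C₀ * g k) : ∃ C, ∀ k, f k ≤ C * g k := by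
  have hbdd : BddAbove (range fun k => f k / g k) :=
    IsBoundedUnder.bddAbove_range ⟨C₀, h.mono fun k hk => (div_le_iff₀ (hg k)).2 hk⟩
  obtain ⟨C, hC⟩ := hbdd
  exact ⟨C, fun k => (div_le_iff₀ (hg k)).1 (hC (mem_range_self k))⟩

lemma frequently_lt_of_ofReal_lt_limsup {α : Type*} {l : Filter α} {f : α → ℝ} {B : ℝ}
    (h : ENNReal.ofReal B < limsup (fun x => ENNReal.ofReal (f x)) l) : ∃ᶠ x in l, B < f x :=
  (frequently_lt_of_lt_limsup (by isBoundedDefault) h).mono fun _ hx =>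
    (ENNReal.ofReal_lt_ofReal_iff'.1 hx).1

lemma eventually_le_of_limsup_lt_ofReal {α : Type*} {l : Filter α} {f : α → ℝ} {B : ℝ}
    (h : limsup (fun x => ENNReal.ofReal (f x)) l < ENNReal.ofReal B) : ∀ᶠ x in l, f x ≤ B :=
  (eventually_lt_of_limsup_lt h (by isBoundedDefault)).mono fun _ hx =>
    (ENNReal.ofReal_lt_ofReal_iff'.1 hx).1.le

lemma exists_seq_forall_of_frequently_nhdsGT {P : ℝ → Prop} (h : ∃ᶠ s in 𝓝[>] 0, P s) :
    ∃ t : ℕ → ℝ, (∀ k, 0 < t k) ∧ Tendsto t atTop (𝓝 0) ∧ ∀ k, P (t k) := by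
  obtain ⟨t, ht, hP⟩ := exists_seq_forall_of_frequently (h.and_eventually self_mem_nhdsWithin)
  exact ⟨t, fun k => (hP k).2, tendsto_nhds_of_tendsto_nhdsWithin ht, fun k => (hP k).1⟩

lemma frequently_isMaxOn_Icc {f : ℝ → ℝ} {b : ℝ} (hb : 0 < b) (hf : ContinuousOn f (Ioc 0 b))
    (hunb : ∀ B, ∃ᶠ s in 𝓝[>] 0, B < f s) : ∃ᶠ s in 𝓝[>] 0, IsMaxOn f (Icc s b) s := by
  refine frequently_iff.2 fun hU => ?_
  obtain ⟨δ, hδ, hδU⟩ := mem_nhdsGT_iff_exists_Ioo_subset.1 hU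
  obtain ⟨ε, hε, hεδ, hεb⟩ : ∃ ε, 0 < ε ∧ ε ≤ δ ∧ ε ≤ b :=
    ⟨min δ b, lt_min hδ hb, min_le_left .., min_le_right ..⟩
  obtain ⟨x, -, hx⟩ := isCompact_Icc.exists_isMaxOn (nonempty_Icc.2 hεb)
    (hf.mono fun s hs => ⟨hε.trans_le hs.1, hs.2⟩)
  -- `u` beats every value of `f` on `[ε, b]`, hence so does the maximiser of `f` on `[u, b]`
  obtain ⟨u, hxu, hu₀, huε⟩ := ((hunb (f x)).and_eventually (Ioo_mem_nhdsGT hε)).exists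
  have hub : u ≤ b := (huε.trans_le hεb).le
  obtain ⟨s, ⟨hus, hsb⟩, hs⟩ := isCompact_Icc.exists_isMaxOn (nonempty_Icc.2 hub)
    (hf.mono fun s hs => ⟨hu₀.trans_le hs.1, hs.2⟩)
  have hsε : s < ε := by
    by_contra! hεs
    have hsx : f s ≤ f x := hx ⟨hεs, hsb⟩
    have hus : f u ≤ f s := hs ⟨le_rfl, hub⟩
    linarith
  exact ⟨s, hδU ⟨hu₀.trans_le hus, hsε.trans_le hεδ⟩, hs.on_subset (Icc_subset_Icc_left hus)⟩

lemma tendsto_atTop_of_isMaxOn_Icc {f : ℝ → ℝ} {b : ℝ} {t : ℕ → ℝ} (hb : 0 < b)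
    (hunb : ∀ B, ∃ᶠ s in 𝓝[>] 0, B < f s) (ht : Tendsto t atTop (𝓝 0))
    (hmax : ∀ k, IsMaxOn f (Icc (t k) b) (t k)) : Tendsto (f ∘ t) atTop atTop := by
  refine tendsto_atTop.2 fun B => ?_
  obtain ⟨u, hBu, hu⟩ := ((hunb B).and_eventually (Ioo_mem_nhdsGT hb)).exists
  filter_upwards [ht.eventually (ge_mem_nhds hu.1)] with k hk
  exact hBu.le.trans (hmax k ⟨hk, hu.2.le⟩)

namespace Delta2Along

variable {M : ℝ → ℝ} {t : ℕ → ℝ}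

lemma of_eventually (hM : ∀ k, 0 < M (t k))
    (h : ∀ c, 1 < c → ∃ C, ∀ᶠ k in atTop, M (c * t k) ≤ C * M (t k)) : Delta2Along M t :=
  fun c hc => (h c hc).elim fun _ hC => exists_forall_le_mul_of_eventually_le hM hC

lemma of_eventually_div_rpow_le {p : ℝ} (hM : ∀ k, 0 < M (t k)) (ht : ∀ k, 0 < t k)
    (h : ∀ c, 1 < c → ∃ C, ∀ᶠ k in atTop,
      M (c * t k) / (c * t k) ^ p ≤ C * (M (t k) / t k ^ p)) : Delta2Along M t := by
  refine of_eventually hM fun c hc => ?_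
  obtain ⟨C, hC⟩ := h c hc
  have hc₀ : 0 < c := one_pos.trans hc
  refine ⟨C * c ^ p, hC.mono fun k hk => ?_⟩
  have htk := ht k
  rw [div_le_iff₀ (by positivity), Real.mul_rpow hc₀.le htk.le] at hk
  calc M (c * t k) ≤ C * (M (t k) / t k ^ p) * (c ^ p * t k ^ p) := hk
    _ = C * c ^ p * M (t k) := by field_simp

lemma of_isMaxOn_Icc {p b : ℝ} (hb : 0 < b) (hM : ∀ k, 0 < M (t k)) (ht : ∀ k, 0 < t k)
    (ht₀ : Tendsto t atTop (𝓝 0))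
    (hmax : ∀ k, IsMaxOn (fun s => M s / s ^ p) (Icc (t k) b) (t k)) :
    Delta2Along M t := by
  refine of_eventually_div_rpow_le (p := p) hM ht fun c hc => ⟨1, ?_⟩
  have hct : Tendsto (fun k => c * t k) atTop (𝓝 0) := by simpa using ht₀.const_mul c
  filter_upwards [hct.eventually (ge_mem_nhds hb)] with k hk
  rw [one_mul]
  exact hmax k ⟨le_mul_of_one_le_left (ht k).le hc.le, hk⟩

lemma of_div_rpow_le_of_le {p B m : ℝ} (hB : 0 ≤ B) (hm : 0 < m) (hM : ∀ k, 0 < M (t k))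
    (ht : ∀ k, 0 < t k) (ht₀ : Tendsto t atTop (𝓝 0))
    (hφB : ∀ᶠ s in 𝓝[>] 0, M s / s ^ p ≤ B) (hφm : ∀ k, m ≤ M (t k) / t k ^ p) :
    Delta2Along M t := by
  refine of_eventually_div_rpow_le (p := p) hM ht fun c hc => ⟨B / m, ?_⟩
  have hct : Tendsto (fun k => c * t k) atTop (𝓝[>] 0) :=
    tendsto_nhdsWithin_iff.2 ⟨by simpa using ht₀.const_mul c,
      Eventually.of_forall fun k => mul_pos (one_pos.trans hc) (ht k)⟩
  filter_upwards [hct.eventually hφB] with k hk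
  calc M (c * t k) / (c * t k) ^ p ≤ B / m * m := by rwa [div_mul_cancel₀ B hm.ne']
    _ ≤ B / m * (M (t k) / t k ^ p) := by gcongr; exact hφm k

end Delta2Along

section LimsupCases

variable {M : ℝ → ℝ} {p : ℝ}

lemma exists_seq_delta2Along_tendsto_top_of_limsup_eq_top (hMc : ContinuousOn M (Ioi 0))
    (hpos : ∀ s, 0 < s → 0 < M s)
    (hL : limsup (fun s => ENNReal.ofReal (M s / s ^ p)) (𝓝[>] 0) = ⊤) :
    ∃ t : ℕ → ℝ, (∀ k, 0 < t k) ∧ Tendsto t atTop (𝓝 0) ∧ Delta2Along M t ∧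
      Tendsto (fun k => ENNReal.ofReal (M (t k) / t k ^ p)) atTop (𝓝 ⊤) := by
  have hunb (B : ℝ) : ∃ᶠ s in 𝓝[>] 0, B < M s / s ^ p :=
    frequently_lt_of_ofReal_lt_limsup (hL ▸ ENNReal.ofReal_lt_top)
  have hφ : ContinuousOn (fun s => M s / s ^ p) (Ioc 0 1) :=
    (hMc.mono Ioc_subset_Ioi_self).div (continuousOn_id.rpow_const fun s hs => .inl hs.1.ne')
      fun s hs => (Real.rpow_pos_of_pos hs.1 p).ne'
  obtain ⟨t, ht, ht₀, hmax⟩ :=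
    exists_seq_forall_of_frequently_nhdsGT (frequently_isMaxOn_Icc one_pos hφ hunb)
  exact ⟨t, ht, ht₀, Delta2Along.of_isMaxOn_Icc one_pos (fun k => hpos _ (ht k)) ht ht₀ hmax,
    ENNReal.tendsto_ofReal_atTop.comp (tendsto_atTop_of_isMaxOn_Icc one_pos hunb ht₀ hmax)⟩

lemma exists_seq_delta2Along_of_limsup_ne_top (hpos : ∀ s, 0 < s → 0 < M s)
    (hL₀ : 0 < limsup (fun s => ENNReal.ofReal (M s / s ^ p)) (𝓝[>] 0))
    (hL : limsup (fun s => ENNReal.ofReal (M s / s ^ p)) (𝓝[>] 0) ≠ ⊤) :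
    ∃ t : ℕ → ℝ, (∀ k, 0 < t k) ∧ Tendsto t atTop (𝓝 0) ∧ Delta2Along M t ∧
      ∀ k, ENNReal.ofReal (1 / 2) * limsup (fun s => ENNReal.ofReal (M s / s ^ p)) (𝓝[>] 0) ≤
        ENNReal.ofReal (M (t k) / t k ^ p) := by
  set L := limsup (fun s => ENNReal.ofReal (M s / s ^ p)) (𝓝[>] 0)
  set ℓ := L.toReal
  have hℓ : 0 < ℓ := ENNReal.toReal_pos hL₀.ne' hL
  have hLℓ : L = ENNReal.ofReal ℓ := (ENNReal.ofReal_toReal hL).symm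
  have hφB : ∀ᶠ s in 𝓝[>] 0, M s / s ^ p ≤ ℓ + 1 := eventually_le_of_limsup_lt_ofReal <|
    show L < _ by rw [hLℓ, ENNReal.ofReal_lt_ofReal_iff (by linarith)]; linarith
  have hfreq : ∃ᶠ s in 𝓝[>] 0, ℓ / 2 < M s / s ^ p := frequently_lt_of_ofReal_lt_limsup <|
    show _ < L by rw [hLℓ, ENNReal.ofReal_lt_ofReal_iff hℓ]; linarith
  obtain ⟨t, ht, ht₀, hφt⟩ := exists_seq_forall_of_frequently_nhdsGT hfreq
  refine ⟨t, ht, ht₀, Delta2Along.of_div_rpow_le_of_le (by linarith) (half_pos hℓ)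
    (fun k => hpos _ (ht k)) ht ht₀ hφB fun k => (hφt k).le, fun k => ?_⟩
  rw [hLℓ, ← ENNReal.ofReal_mul one_half_pos.le, one_div_mul_eq_div]
  exact ENNReal.ofReal_le_ofReal (hφt k).le

end LimsupCases

theorem orlicz_delta2_wrt_sequence_of_limsup_pos_general
    (M : ℝ → ℝ) (p : ℝ)
    (hconv : ConvexOn ℝ Set.univ M)
    (hpos : ∀ t : ℝ, t ≠ 0 → 0 < M t)
    (hlimsup : 0 < Filter.limsup (fun t : ℝ => ENNReal.ofReal (M t / t ^ p))
        (nhdsWithin 0 (Set.Ioi 0))) :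
    ∃ (a : ℝ) (t : ℕ → ℝ), 0 < a ∧ (∀ k, 0 < t k) ∧
      Filter.Tendsto t Filter.atTop (nhds 0) ∧
      (∀ c : ℝ, 1 < c → ∃ C : ℝ, ∀ k, M (c * t k) ≤ C * M (t k)) ∧
      ENNReal.ofReal a *
          Filter.limsup (fun s : ℝ => ENNReal.ofReal (M s / s ^ p))
            (nhdsWithin 0 (Set.Ioi 0)) ≤
        Filter.liminf (fun k : ℕ => ENNReal.ofReal (M (t k) / (t k) ^ p)) Filter.atTop := by
  have hMpos (s : ℝ) (hs : 0 < s) : 0 < M s := hpos s hs.ne'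
  rcases eq_or_ne (limsup (fun s => ENNReal.ofReal (M s / s ^ p)) (𝓝[>] 0)) ⊤ with hL | hL
  · have hMc : ContinuousOn M (Ioi 0) := (hconv.continuousOn isOpen_univ).mono (subset_univ _)
    obtain ⟨t, ht, ht₀, hΔ, htop⟩ :=
      exists_seq_delta2Along_tendsto_top_of_limsup_eq_top hMc hMpos hL
    exact ⟨1, t, one_pos, ht, ht₀, hΔ, by rw [htop.liminf_eq]; exact le_top⟩
  · obtain ⟨t, ht, ht₀, hΔ, hle⟩ := exists_seq_delta2Along_of_limsup_ne_top hMpos hlimsup hL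
    exact ⟨1 / 2, t, one_half_pos, ht, ht₀, hΔ,
      le_liminf_of_le (by isBoundedDefault) (.of_forall hle)⟩

/-- Let `M` be an Orlicz function (convex, even, `M 0 = 0`, `M t > 0` for
`t ≠ 0`) and `p ≥ 1` with `limsup_{t→0⁺} M t / t^p > 0` (computed in `[0,∞]`).
Then there are `a > 0` and a positive sequence `t_k → 0` such that `M` satisfies the
`Δ₂`-condition with respect to `(t_k)` and
`liminf_k M(t_k)/t_k^p ≥ a * limsup_{t→0⁺} M t / t^p` in `[0,∞]`. -/
theorem orlicz_delta2_wrt_sequence_of_limsup_pos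
    (M : ℝ → ℝ) (p : ℝ) (hp : 1 ≤ p)
    (hconv : ConvexOn ℝ Set.univ M)
    (heven : ∀ t : ℝ, M (-t) = M t)
    (hzero : M 0 = 0)
    (hpos : ∀ t : ℝ, t ≠ 0 → 0 < M t)
    (hlimsup : 0 < Filter.limsup (fun t : ℝ => ENNReal.ofReal (M t / t ^ p))
        (nhdsWithin 0 (Set.Ioi 0))) :
    ∃ (a : ℝ) (t : ℕ → ℝ), 0 < a ∧ (∀ k, 0 < t k) ∧
      Filter.Tendsto t Filter.atTop (nhds 0) ∧
      (∀ c : ℝ, 1 < c → ∃ C : ℝ, ∀ k, M (c * t k) ≤ C * M (t k)) ∧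
      ENNReal.ofReal a *
          Filter.limsup (fun s : ℝ => ENNReal.ofReal (M s / s ^ p))
            (nhdsWithin 0 (Set.Ioi 0)) ≤
        Filter.liminf (fun k : ℕ => ENNReal.ofReal (M (t k) / (t k) ^ p)) Filter.atTop :=
  orlicz_delta2_wrt_sequence_of_limsup_pos_general M p hconv hpos hlimsup
end

section
/- Let M be an Orlicz function and let p ≥ 1 be a real number with limsup_{t→0⁺} M(t)/t^p > 0. Then there exists a sequence (t_k)_{k∈ℕ} of positive reals with t_k → 0 such that M satisfies the Δ2-condition with respect to (t_k). -/
/-! With `f t = M t / t ^ p`, the limsup hypothesis gives `a > 0` with `a < f t` for arbitrarily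
small `t > 0`. If `f ≤ B` near `0`, these points satisfy `f s ≤ (B / a) * f t` for all small
`s ≥ t`; otherwise the continuous `f` is unbounded near `0`, and the points `w` at which `f`
attains its maximum over `[w, 1]` accumulate at `0`. Either way we get `t_k → 0` and `K` with
`M (c t_k) = f (c t_k) (c t_k) ^ p ≤ K c ^ p M (t_k)` as soon as `c t_k` is small, and the
finitely many remaining indices only enlarge the constant. -/

open Filter Set Topology

lemma exists_pos_frequently_lt_of_limsup_ofReal_pos {α : Type*} {l : Filter α} {f : α → ℝ}
    (h : 0 < limsup (fun x => ENNReal.ofReal (f x)) l) :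
    ∃ a > 0, ∃ᶠ x in l, a < f x := by
  obtain ⟨a, -, ha, haL⟩ := ENNReal.lt_iff_exists_real_btwn.1 h
  refine ⟨a, ENNReal.ofReal_pos.1 ha, ?_⟩
  exact (frequently_lt_of_lt_limsup isCobounded_le_of_bot haL).mono
    fun x hx => (ENNReal.ofReal_lt_ofReal_iff'.1 hx).1

lemma frequently_isMaxOn_Icc_of_forall_frequently_lt {f : ℝ → ℝ} (hf : ContinuousOn f (Ioi 0))
    (hunb : ∀ B, ∃ᶠ s in 𝓝[>] 0, B < f s) :
    ∃ᶠ w in 𝓝[>] 0, IsMaxOn f (Icc w 1) w := by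
  refine (nhdsGT_basis 0).frequently_iff.2 fun ε hε => ?_
  have hcont {x : ℝ} (hx : 0 < x) : ContinuousOn f (Icc x 1) :=
    hf.mono fun s hs => hx.trans_le hs.1
  set ε' := min ε 1
  have hε' : 0 < ε' := lt_min hε one_pos
  obtain ⟨m, -, hmax⟩ :=
    isCompact_Icc.exists_isMaxOn (nonempty_Icc.2 (min_le_right ε 1)) (hcont hε')
  obtain ⟨x, ⟨hx0, hxε⟩, hmx⟩ :=
    (nhdsGT_basis 0).frequently_iff.1 (hunb (f m)) ε' hε'
  have hx1 : x ≤ 1 := (hxε.trans_le (min_le_right ε 1)).le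
  obtain ⟨w, hw, hwmax⟩ := isCompact_Icc.exists_isMaxOn (nonempty_Icc.2 hx1) (hcont hx0)
  -- `f w ≥ f x > f m = max f on [ε', 1]`
  have hwε' : w < ε' := by
    by_contra! hle
    have hwm : f w ≤ f m := hmax ⟨hle, hw.2⟩
    have hxw : f x ≤ f w := hwmax ⟨le_rfl, hx1⟩
    linarith
  exact ⟨w, ⟨hx0.trans_le hw.1, hwε'.trans_le (min_le_left ε 1)⟩,
    fun s hs => hwmax ⟨hw.1.trans hs.1, hs.2⟩⟩

lemma exists_frequently_forall_Ico_le_mul {f : ℝ → ℝ} (hf : ContinuousOn f (Ioi 0))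
    {a : ℝ} (ha : 0 < a) (hfreq : ∃ᶠ s in 𝓝[>] 0, a < f s) :
    ∃ δ > 0, ∃ K, ∃ᶠ w in 𝓝[>] 0, ∀ s ∈ Ico w δ, f s ≤ K * f w := by
  by_cases hbdd : ∃ B, ∀ᶠ s in 𝓝[>] 0, f s ≤ B
  · obtain ⟨B, hB⟩ := hbdd
    obtain ⟨δ, hδ, hδB⟩ := mem_nhdsGT_iff_exists_Ioo_subset.1 hB
    have hB0 : 0 ≤ B := by
      obtain ⟨s, hs, hsB⟩ := (hfreq.and_eventually hB).exists
      linarith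
    refine ⟨δ, hδ, B / a, (hfreq.and_eventually self_mem_nhdsWithin).mono ?_⟩
    rintro w ⟨hw, hw0⟩ s ⟨hws, hsδ⟩
    calc f s ≤ B := hδB ⟨lt_of_lt_of_le hw0 hws, hsδ⟩
      _ = B / a * a := by field_simp
      _ ≤ B / a * f w := by gcongr
  · push Not at hbdd
    refine ⟨1, one_pos, 1, (frequently_isMaxOn_Icc_of_forall_frequently_lt hf hbdd).mono ?_⟩
    intro w hw s hs
    simpa using hw ⟨hs.1, hs.2.le⟩

lemma exists_forall_le_mul_of_div_rpow_le {M : ℝ → ℝ} {p δ K c : ℝ} {t : ℕ → ℝ}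
    (htpos : ∀ k, 0 < t k) (hMt : ∀ k, 0 < M (t k)) (ht : Tendsto t atTop (𝓝 0)) (hδ : 0 < δ)
    (hdom : ∀ k, ∀ s ∈ Ico (t k) δ, M s / s ^ p ≤ K * (M (t k) / t k ^ p)) (hc : 1 ≤ c) :
    ∃ C, ∀ k, M (c * t k) ≤ C * M (t k) := by
  have hsmall : ∀ᶠ k in atTop, c * t k < δ := by
    have hct := ht.const_mul c
    rw [mul_zero] at hct
    exact hct.eventually (gt_mem_nhds hδ)
  have hev : ∀ᶠ k in atTop, M (c * t k) / M (t k) ≤ K * c ^ p := by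
    filter_upwards [hsmall] with k hk
    have htk := htpos k
    have h := hdom k (c * t k) ⟨le_mul_of_one_le_left htk.le hc, hk⟩
    rw [Real.mul_rpow (by positivity) htk.le, div_le_iff₀ (by positivity)] at h
    rw [div_le_iff₀ (hMt k)]
    calc M (c * t k) ≤ K * (M (t k) / t k ^ p) * (c ^ p * t k ^ p) := h
      _ = K * c ^ p * M (t k) := by field_simp
  obtain ⟨C, hC⟩ := (isBoundedUnder_of_eventually_le hev).bddAbove_range
  exact ⟨C, fun k => (div_le_iff₀ (hMt k)).1 (hC ⟨k, rfl⟩)⟩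

theorem orlicz_exists_delta2_sequence_general
    (M : ℝ → ℝ) (p : ℝ)
    (hconv : ConvexOn ℝ Set.univ M)
    (hpos : ∀ t : ℝ, t ≠ 0 → 0 < M t)
    (hlimsup : 0 < Filter.limsup (fun t : ℝ => ENNReal.ofReal (M t / t ^ p))
        (nhdsWithin 0 (Set.Ioi 0))) :
    ∃ t : ℕ → ℝ, (∀ k, 0 < t k) ∧
      Filter.Tendsto t Filter.atTop (nhds 0) ∧
      (∀ c : ℝ, 1 < c → ∃ C : ℝ, ∀ k, M (c * t k) ≤ C * M (t k)) := by
  have hM : Continuous M := continuousOn_univ.1 (hconv.continuousOn isOpen_univ)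
  have hf : ContinuousOn (fun t => M t / t ^ p) (Ioi 0) :=
    hM.continuousOn.div (continuousOn_id.rpow_const fun s hs => Or.inl (ne_of_gt hs))
      fun s hs => (Real.rpow_pos_of_pos hs p).ne'
  obtain ⟨a, ha, hfreq⟩ := exists_pos_frequently_lt_of_limsup_ofReal_pos hlimsup
  obtain ⟨δ, hδ, K, hdom⟩ := exists_frequently_forall_Ico_le_mul hf ha hfreq
  obtain ⟨t, ht, htP⟩ := exists_seq_forall_of_frequently (hdom.and_eventually self_mem_nhdsWithin)
  have ht0 : Tendsto t atTop (𝓝 0) := ht.mono_right nhdsWithin_le_nhds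
  refine ⟨t, fun k => (htP k).2, ht0, fun c hc => ?_⟩
  exact exists_forall_le_mul_of_div_rpow_le (fun k => (htP k).2)
    (fun k => hpos _ (htP k).2.ne') ht0 hδ (fun k => (htP k).1) hc.le

/-- Let `M` be an Orlicz function and `p ≥ 1` a real number with
`limsup_{t→0⁺} M t / t^p > 0` (computed in `[0,∞]`).  Then there is a sequence of positive
reals `t_k → 0` such that `M` satisfies the `Δ₂`-condition with respect to `(t_k)`:
for every `c > 1` there is `C` with `M (c * t_k) ≤ C * M (t_k)` for all `k`. -/
theorem orlicz_exists_delta2_sequence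
    (M : ℝ → ℝ) (p : ℝ) (hp : 1 ≤ p)
    (hconv : ConvexOn ℝ Set.univ M)
    (heven : ∀ t : ℝ, M (-t) = M t)
    (hzero : M 0 = 0)
    (hpos : ∀ t : ℝ, t ≠ 0 → 0 < M t)
    (hlimsup : 0 < Filter.limsup (fun t : ℝ => ENNReal.ofReal (M t / t ^ p))
        (nhdsWithin 0 (Set.Ioi 0))) :
    ∃ t : ℕ → ℝ, (∀ k, 0 < t k) ∧
      Filter.Tendsto t Filter.atTop (nhds 0) ∧
      (∀ c : ℝ, 1 < c → ∃ C : ℝ, ∀ k, M (c * t k) ≤ C * M (t k)) :=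
  orlicz_exists_delta2_sequence_general M p hconv hpos hlimsup
end

section
/- Let M be an Orlicz function and let p ≥ 1 be a real number. If sup{ M(u·v) / (u^p · M(v)) : u, v ∈ (0,1] } = ∞, then there exists a sequence z : ℕ → ℝ, not identically zero, such that (i) for every real c the family (n ↦ M(c·z(n))) is summable, and (ii) limsup_{t→0⁺} ( ∑_{n∈ℕ} M(t·z(n)) ) /ت^p = ∞, i.e. the quotient (∑_{n} M(t·z(n)))/t^p is unbounded as t → 0⁺. -/
/-!
Outside the square `(0, δ]²` the quotient `M (u * v) / (u ^ p * M v)` is bounded by `δ ^ (-2p)`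
times its bound inside, so its unboundedness survives the restriction to arbitrarily small `u, v`.
Rescaling a pair `(u, w)` found there to `(m * u, w / m)` gives, for each `k`, a number
`u_k < 2⁻ᵏ` and a block of `N_k` copies of some `v_k` with `N_k M ((k + 1) v_k) ≤ 2⁻ᵏ` and
`2ᵏ u_kᵖ ≤ N_k M (u_k v_k)`. Concatenating the blocks gives `z`: the first estimate makes
`∑ M (c z n)` converge for every `c`, the second puts the quotient at `t = u_k` above `2ᵏ`.
-/

open Set Filter

structure IsOrliczFunction (M : ℝ → ℝ) : Prop where
  convexOn : ConvexOn ℝ univ M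
  even : ∀ t, M (-t) = M t
  map_zero : M 0 = 0
  pos : ∀ t, t ≠ 0 → 0 < M t

def dilationQuotients (M : ℝ → ℝ) (p : ℝ) : Set ℝ :=
  {r | ∃ u ∈ Ioc (0:ℝ) 1, ∃ v ∈ Ioc (0:ℝ) 1, r = M (u * v) / (u ^ p * M v)}

namespace IsOrliczFunction

variable {M : ℝ → ℝ}

theorem nonneg (hM : IsOrliczFunction M) (t : ℝ) : 0 ≤ M t := by
  rcases eq_or_ne t 0 with rfl | ht
  · exact hM.map_zero.ge
  · exact (hM.pos t ht).le

theorem map_mul_le (hM : IsOrliczFunction M) {u : ℝ} (hu0 : 0 ≤ u) (hu1 : u ≤ 1) (v : ℝ) :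
    M (u * v) ≤ u * M v := by
  simpa [hM.map_zero] using
    hM.convexOn.2 (mem_univ v) (mem_univ 0) hu0 (sub_nonneg.2 hu1) (add_sub_cancel u 1)

theorem map_mul_le_self (hM : IsOrliczFunction M) {u : ℝ} (hu0 : 0 ≤ u) (hu1 : u ≤ 1)
    (v : ℝ) : M (u * v) ≤ M v :=
  (hM.map_mul_le hu0 hu1 v).trans (mul_le_of_le_one_left (hM.nonneg v) hu1)

theorem map_le_of_abs_le (hM : IsOrliczFunction M) {x y : ℝ} (h : |x| ≤ |y|) : M x ≤ M y := by
  have habs : ∀ t, M |t| = M t := fun t => by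
    rcases abs_choice t with ht | ht <;> simp only [ht, hM.even]
  rcases eq_or_ne y 0 with rfl | hy
  · rw [abs_zero] at h
    rw [abs_nonpos_iff.1 h]
  have hy' : 0 < |y| := abs_pos.2 hy
  rw [← habs x, ← habs y, ← div_mul_cancel₀ |x| hy'.ne']
  exact hM.map_mul_le_self (by positivity) ((div_le_one hy').2 h) _

theorem exists_lt_map_mul_of_not_bddAbove (hM : IsOrliczFunction M) {p : ℝ} (hp : 0 ≤ p)
    (hsup : ¬ BddAbove (dilationQuotients M p))
    {δ : ℝ} (hδ0 : 0 < δ) (hδ1 : δ ≤ 1) (C : ℝ) :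
    ∃ u ∈ Ioc 0 δ, ∃ v ∈ Ioc 0 δ, C * (u ^ p * M v) < M (u * v) := by
  by_contra! hC
  apply hsup
  set d := δ ^ p
  have hd0 : 0 < d := by positivity
  have hd1 : d ≤ 1 := Real.rpow_le_one hδ0.le hδ1 hp
  refine ⟨max C 1 / d ^ 2, ?_⟩
  rintro _ ⟨u, ⟨hu0, hu1⟩, v, ⟨hv0, hv1⟩, rfl⟩
  have hMv := hM.pos v hv0.ne'
  rw [div_le_iff₀ (by positivity)]
  rcases lt_or_ge (δ * δ) u with hu | hu
  · have hdu : d ^ 2 ≤ u ^ p := by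
      rw [sq, ← Real.mul_rpow hδ0.le hδ0.le]
      exact Real.rpow_le_rpow (by positivity) hu.le hp
    calc M (u * v) ≤ 1 * M v := by rw [one_mul]; exact hM.map_mul_le_self hu0.le hu1 v
      _ ≤ u ^ p / d ^ 2 * M v := by gcongr; exact (one_le_div (by positivity)).2 hdu
      _ = 1 / d ^ 2 * (u ^ p * M v) := by ring
      _ ≤ max C 1 / d ^ 2 * (u ^ p * M v) := by gcongr; exact le_max_right _ _
  rcases le_or_gt v δ with hv | hv
  · have hCd : C ≤ max C 1 / d ^ 2 :=
      (le_max_left C 1).trans (le_div_self (by positivity) (by positivity) (by nlinarith))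
    calc M (u * v) ≤ C * (u ^ p * M v) := hC u ⟨hu0, hu.trans (by nlinarith)⟩ v ⟨hv0, hv⟩
      _ ≤ max C 1 / d ^ 2 * (u ^ p * M v) := mul_le_mul_of_nonneg_right hCd (by positivity)
  · -- `u * v = u' * δ` with `u' ≤ δ`, and `M δ ≤ M v`
    set u' := u * v / δ
    have hu' : u' ∈ Ioc 0 δ := ⟨by positivity, (div_le_iff₀ hδ0).2 (by nlinarith)⟩
    have hu'p : u' ^ p ≤ u ^ p / d := by
      rw [← Real.div_rpow hu0.le hδ0.le]
      exact Real.rpow_le_rpow hu'.1.le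
        (div_le_div_of_nonneg_right (mul_le_of_le_one_right hu0.le hv1) hδ0.le) hp
    calc M (u * v) = M (u' * δ) := by rw [div_mul_cancel₀ _ hδ0.ne']
      _ ≤ C * (u' ^ p * M δ) := hC u' hu' δ ⟨hδ0, le_rfl⟩
      _ ≤ max C 1 * (u ^ p / d * M v) := by
        have hMδ : M δ ≤ M v :=
          hM.map_le_of_abs_le <| by rw [abs_of_pos hδ0, abs_of_pos hv0]; exact hv.le
        exact mul_le_mul (le_max_left _ _) (mul_le_mul hu'p hMδ (hM.nonneg _) (by positivity))
          (mul_nonneg (by positivity) (hM.nonneg _)) (by positivity)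
      _ = max C 1 / d * (u ^ p * M v) := by ring
      _ ≤ max C 1 / d ^ 2 * (u ^ p * M v) := by gcongr; nlinarith

theorem exists_block_of_not_bddAbove (hM : IsOrliczFunction M) {p : ℝ} (hp : 0 ≤ p)
    (hsup : ¬ BddAbove (dilationQuotients M p))
    {m η : ℝ} (hm : 0 < m) (hη : 0 < η) :
    ∃ u v : ℝ, ∃ N : ℕ,
      0 < u ∧ u < η ∧ N * M (m * v) ≤ η ∧ u ^ p ≤ η * (N * M (u * v)) := by
  have hM1 : 0 < M 1 := hM.pos 1 one_ne_zero
  set δ := min 1 (η / (2 * (m + M 1)))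
  have hδ0 : 0 < δ := lt_min one_pos (by positivity)
  have hδη : δ * (m + M 1) ≤ η / 2 := by
    calc δ * (m + M 1) ≤ η / (2 * (m + M 1)) * (m + M 1) := by
          gcongr; exact min_le_right _ _
      _ = η / 2 := by field_simp
  obtain ⟨u', ⟨hu'0, hu'δ⟩, w, ⟨hw0, hwδ⟩, hlt⟩ :=
    hM.exists_lt_map_mul_of_not_bddAbove hp hsup hδ0 (min_le_left _ _) (2 * m ^ p / η ^ 2)
  have hMu'w : 0 < M (u' * w) := hM.pos _ (by positivity)
  -- `(u', w) ↦ (m * u', w / m)` keeps the product `u * v` and turns `M w` into `M (m * v)`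
  set a := (m * u') ^ p / (η * M (u' * w))
  have ha0 : 0 ≤ a := by positivity
  refine ⟨m * u', w / m, ⌈a⌉₊, by positivity, by nlinarith, ?_, ?_⟩
  · rw [mul_div_cancel₀ _ hm.ne']
    have hMw : M w ≤ η / 2 := by
      calc M w = M (w * 1) := by rw [mul_one]
        _ ≤ w * M 1 := hM.map_mul_le hw0.le (hwδ.trans (min_le_left _ _)) 1
        _ ≤ η / 2 := by nlinarith
    have haw : a * M w < η / 2 := by
      rw [div_mul_eq_mul_div, div_lt_iff₀ (by positivity), Real.mul_rpow hm.le hu'0.le]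
      calc m ^ p * u' ^ p * M w = η ^ 2 / 2 * (2 * m ^ p / η ^ 2 * (u' ^ p * M w)) := by
            field_simp
        _ < η ^ 2 / 2 * M (u' * w) := by gcongr
        _ = η / 2 * (η * M (u' * w)) := by ring
    calc ⌈a⌉₊ * M w ≤ (a + 1) * M w := by
          gcongr
          · exact hM.nonneg w
          · exact (Nat.ceil_lt_add_one ha0).le
      _ ≤ η := by linarith
  · rw [show m * u' * (w / m) = u' * w by field_simp]
    calc (m * u') ^ p = η * (a * M (u' * w)) := by simp only [a]; field_simp
      _ ≤ η * (⌈a⌉₊ * M (u' * w)) := by gcongr; exact Nat.le_ceil a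

theorem summable_natCast_mul_map_mul (hM : IsOrliczFunction M) {v g : ℕ → ℝ} {N : ℕ → ℕ}
    (hg : Summable g) (hN : ∀ k, N k * M ((k + 1) * v k) ≤ g k) (c : ℝ) :
    Summable fun k => N k * M (c * v k) := by
  refine hg.of_norm_bounded_eventually_nat ?_
  filter_upwards [eventually_ge_atTop ⌈|c|⌉₊] with k hk
  have hc : |c| ≤ k + 1 := (Nat.ceil_le.1 hk).trans (le_add_of_nonneg_right zero_le_one)
  rw [Real.norm_of_nonneg (mul_nonneg (Nat.cast_nonneg _) (hM.nonneg _))]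
  refine le_trans ?_ (hN k)
  gcongr
  refine hM.map_le_of_abs_le ?_
  rw [abs_mul, abs_mul, abs_of_pos (Nat.cast_add_one_pos (α := ℝ) k)]
  gcongr

end IsOrliczFunction

/-- `v k` repeated `N k` times, at the indices `Nat.pair k i` with `i < N k`; zero elsewhere. -/
def blockSeq (v : ℕ → ℝ) (N : ℕ → ℕ) (n : ℕ) : ℝ :=
  if (Nat.unpair n).2 < N (Nat.unpair n).1 then v (Nat.unpair n).1 else 0

theorem hasSum_comp_blockSeq {f : ℝ → ℝ} (hf0 : f 0 = 0) (hf : ∀ t, 0 ≤ f t)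
    {v : ℕ → ℝ} {N : ℕ → ℕ} {a : ℝ} (h : HasSum (fun k => N k * f (v k)) a) :
    HasSum (fun n => f (blockSeq v N n)) a := by
  set g : ℕ × ℕ → ℝ := fun q => if q.2 < N q.1 then f (v q.1) else 0
  have hfiber : ∀ k, HasSum (fun i => g (k, i)) (N k * f (v k)) := fun k => by
    convert hasSum_sum_of_ne_finset_zero (s := Finset.range (N k))
      (f := fun i => g (k, i)) ?_
    · simp [g, Finset.sum_ite_of_true]
    · intro i hi
      simp_all [g]
    · infer_instance
  have hg : Summable g := by
    refine (summable_prod_of_nonneg fun q => ?_).2 ⟨fun k => (hfiber k).summable, ?_⟩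
    · by_cases hq : q.2 < N q.1 <;> simp [g, hq, hf]
    · simpa only [(hfiber _).tsum_eq] using h.summable
  have hga : HasSum g a := (hg.hasSum.prod_fiberwise hfiber).unique h ▸ hg.hasSum
  convert (Nat.pairEquiv.symm.hasSum_iff).2 hga using 2 with n
  simp only [blockSeq, Function.comp_apply, g, Nat.pairEquiv_symm_apply, apply_ite f, hf0]

/-- Let `M` be an Orlicz function and `p ≥ 1`.  If
`sup { M (u*v) / (u^p * M v) : u, v ∈ (0,1] } = ∞` (i.e. that set of quotients is not
bounded above), then there is a sequence `z : ℕ → ℝ`, not identically zero, such that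
`n ↦ M (c * z n)` is summable for every real `c` (i.e. `z ∈ h_M`) and the quotient
`(∑' n, M (t * z n)) / t^p` is unbounded as `t → 0⁺`. -/
theorem orlicz_exists_vector_with_unbounded_modular_quotient
    (M : ℝ → ℝ) (p : ℝ) (hp : 1 ≤ p)
    (hconv : ConvexOn ℝ Set.univ M)
    (heven : ∀ t : ℝ, M (-t) = M t)
    (hzero : M 0 = 0)
    (hpos : ∀ t : ℝ, t ≠ 0 → 0 < M t)
    (hsup : ¬ BddAbove {r : ℝ | ∃ u ∈ Set.Ioc (0:ℝ) 1, ∃ v ∈ Set.Ioc (0:ℝ) 1,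
        r = M (u * v) / (u ^ p * M v)}) :
    ∃ z : ℕ → ℝ, z ≠ 0 ∧
      (∀ c : ℝ, Summable fun n : ℕ => M (c * z n)) ∧
      (∀ R : ℝ, ∀ ε : ℝ, 0 < ε → ∃ s : ℝ, 0 < s ∧ s < ε ∧
        R < (∑' n : ℕ, M (s * z n)) / s ^ p) := by
  have hM : IsOrliczFunction M := ⟨hconv, heven, hzero, hpos⟩
  choose u v N hu0 huη hNv hNu using fun k : ℕ =>
    hM.exists_block_of_not_bddAbove (zero_le_one.trans hp) hsup (m := k + 1) (η := (1 / 2) ^ k)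
      (by positivity) (by positivity)
  have hsum (c : ℝ) := hM.summable_natCast_mul_map_mul summable_geometric_two hNv c
  have hz (c : ℝ) : HasSum (fun n => M (c * blockSeq v N n)) (∑' k, N k * M (c * v k)) :=
    hasSum_comp_blockSeq (f := fun t => M (c * t)) (by simp [hM.map_zero])
      (fun _ => hM.nonneg _) (hsum c).hasSum
  have hlower (k : ℕ) : 2 ^ k * u k ^ p ≤ ∑' n, M (u k * blockSeq v N n) := by
    rw [(hz (u k)).tsum_eq]
    calc 2 ^ k * u k ^ p ≤ 2 ^ k * ((1 / 2) ^ k * (N k * M (u k * v k))) := by gcongr; exact hNu k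
      _ = N k * M (u k * v k) := by rw [← mul_assoc, ← mul_pow]; norm_num
      _ ≤ ∑' j, N j * M (u k * v j) :=
        (hsum (u k)).le_tsum k fun j _ => mul_nonneg (Nat.cast_nonneg _) (hM.nonneg _)
  refine ⟨blockSeq v N, fun h => ?_, fun c => (hz c).summable, fun R ε hε => ?_⟩
  · have h0 : u 0 ^ p ≤ 0 := by simpa [h, hM.map_zero] using hlower 0
    exact (Real.rpow_pos_of_pos (hu0 0) p).not_ge h0
  · obtain ⟨k, hkε, hkR⟩ :=
      (((tendsto_pow_atTop_nhds_zero_of_lt_one (by norm_num) (by norm_num : (1 / 2 : ℝ) < 1)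
        ).eventually (gt_mem_nhds hε)).and
        ((tendsto_pow_atTop_atTop_of_one_lt one_lt_two).eventually_gt_atTop R)).exists
    refine ⟨u k, hu0 k, (huη k).trans hkε, hkR.trans_le ?_⟩
    rw [le_div_iff₀ (Real.rpow_pos_of_pos (hu0 k) p)]
    exact hlower k
end

section
/- Let M be an Orlicz function and let p ≥ 1 be a real number. Suppose that limsup_{t→0⁺} M(t)/t^p < ∞ and that sup{ M(u·v) / (u^p · M(v)) : u, v ∈ (0,1] } = ∞. Then for every a ∈ (0,1], sup{ M(u·v) / (u^p · M(v)) : u ∈ (0,1], v ∈ (0,a] } = ∞. -/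
/-!
Convexity together with `M 0 = 0 ≤ M` makes `M` nondecreasing on `[0, ∞)`, and then the finite
limsup upgrades to a bound `M t ≤ C t ^ p` on all of `(0, 1]`. For `v ∈ [a, 1]` this gives
`M (u v) / (u ^ p M v) ≤ C v ^ p / M v ≤ C / M a`, so the quotient over `v ∈ (0, 1]` can only be
unbounded because of the values with `v ∈ (0, a]`.
-/

open Set Filter Topology

theorem ConvexOn.monotoneOn_Ici_of_isMinOn {f : ℝ → ℝ} {c : ℝ} (hf : ConvexOn ℝ (Ici c) f)
    (hmin : IsMinOn f (Ici c) c) : MonotoneOn f (Ici c) := by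
  intro x hx y hy hxy
  rcases (mem_Ici.1 hx).eq_or_lt with rfl | hcx
  · exact hmin hy
  · exact hf.le_right_of_left_le'' self_mem_Ici hy hcx hxy (hmin hx)

theorem Filter.exists_eventually_le_of_limsup_ofReal_lt_top {α : Type*} {l : Filter α}
    {f : α → ℝ} (h : limsup (fun x => ENNReal.ofReal (f x)) l < ⊤) :
    ∃ C : ℝ, ∀ᶠ x in l, f x ≤ C := by
  obtain ⟨b, hlb, hb⟩ := exists_between h
  refine ⟨b.toReal, (eventually_lt_of_limsup_lt hlb).mono fun x hx => ?_⟩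
  exact (ENNReal.ofReal_le_iff_le_toReal hb.ne).1 hx.le

theorem exists_le_mul_rpow_of_limsup_lt_top {M : ℝ → ℝ} {p : ℝ} (hp : 0 ≤ p)
    (hmono : MonotoneOn M (Ioc 0 1))
    (hlimsup : limsup (fun t => ENNReal.ofReal (M t / t ^ p)) (𝓝[>] 0) < ⊤) :
    ∃ C : ℝ, ∀ t ∈ Ioc (0 : ℝ) 1, M t ≤ C * t ^ p := by
  obtain ⟨C₀, hC₀⟩ := exists_eventually_le_of_limsup_ofReal_lt_top hlimsup
  obtain ⟨δ, hδ : 0 < δ, hδC₀⟩ := mem_nhdsGT_iff_exists_Ioo_subset.1 hC₀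
  refine ⟨max C₀ (|M 1| / δ ^ p), fun t ht => ?_⟩
  have htp : 0 < t ^ p := Real.rpow_pos_of_pos ht.1 p
  rcases lt_or_ge t δ with htδ | hδt
  · calc M t ≤ C₀ * t ^ p := (div_le_iff₀ htp).1 (hδC₀ ⟨ht.1, htδ⟩)
      _ ≤ max C₀ (|M 1| / δ ^ p) * t ^ p := by gcongr; exact le_max_left _ _
  · have hδp : 0 < δ ^ p := Real.rpow_pos_of_pos hδ p
    calc M t ≤ |M 1| := (hmono ht ⟨one_pos, le_rfl⟩ ht.2).trans (le_abs_self _)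
      _ ≤ |M 1| / δ ^ p * t ^ p := by
          rw [div_mul_eq_mul_div, le_div_iff₀ hδp]
          gcongr
      _ ≤ max C₀ (|M 1| / δ ^ p) * t ^ p := by gcongr; exact le_max_right _ _

theorem div_rpow_mul_le_of_le_mul_rpow {M : ℝ → ℝ} {p C a u v : ℝ} (hp : 0 ≤ p)
    (hC : ∀ t ∈ Ioc (0 : ℝ) 1, M t ≤ C * t ^ p) (hmono : MonotoneOn M (Ioc 0 1))
    (ha : 0 < a) (hMa : 0 < M a) (hu : u ∈ Ioc (0 : ℝ) 1) (hav : a ≤ v) (hv : v ≤ 1) :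
    M (u * v) / (u ^ p * M v) ≤ C / M a := by
  have hv0 : 0 < v := ha.trans_le hav
  have hMav : M a ≤ M v := hmono ⟨ha, hav.trans hv⟩ ⟨hv0, hv⟩ hav
  have hup : 0 < u ^ p := Real.rpow_pos_of_pos hu.1 p
  have hvp : 0 < v ^ p := Real.rpow_pos_of_pos hv0 p
  have hC0 : 0 < C := pos_of_mul_pos_left ((hMa.trans_le hMav).trans_le (hC v ⟨hv0, hv⟩)) hvp.le
  calc M (u * v) / (u ^ p * M v) ≤ C * (u * v) ^ p / (u ^ p * M v) := by
        refine div_le_div_of_nonneg_right ?_ (mul_pos hup (hMa.trans_le hMav)).le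
        exact hC _ ⟨mul_pos hu.1 hv0, mul_le_one₀ hu.2 hv0.le hv⟩
    _ = C * v ^ p / M v := by
        rw [Real.mul_rpow hu.1.le hv0.le]
        field_simp
    _ ≤ C * 1 / M a := by
        gcongr
        exact Real.rpow_le_one hv0.le hv hp
    _ = C / M a := by rw [mul_one]

theorem orlicz_unbounded_quotient_localizes_general
    (M : ℝ → ℝ) (p : ℝ) (hp : 1 ≤ p)
    (hconv : ConvexOn ℝ Set.univ M)
    (hzero : M 0 = 0)
    (hpos : ∀ t : ℝ, t ≠ 0 → 0 < M t)
    (hlimsup : Filter.limsup (fun t : ℝ => ENNReal.ofReal (M t / t ^ p))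
        (nhdsWithin 0 (Set.Ioi 0)) < ⊤)
    (hsup : ¬ BddAbove {r : ℝ | ∃ u ∈ Set.Ioc (0:ℝ) 1, ∃ v ∈ Set.Ioc (0:ℝ) 1,
        r = M (u * v) / (u ^ p * M v)}) :
    ∀ a ∈ Set.Ioc (0:ℝ) 1,
      ¬ BddAbove {r : ℝ | ∃ u ∈ Set.Ioc (0:ℝ) 1, ∃ v ∈ Set.Ioc (0:ℝ) a,
        r = M (u * v) / (u ^ p * M v)} := by
  intro a ha ⟨B, hB⟩
  have hp0 : 0 ≤ p := zero_le_one.trans hp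
  have hmin : IsMinOn M (Ici 0) 0 := isMinOn_iff.2 fun t _ => by
    rcases eq_or_ne t 0 with rfl | ht
    · exact le_rfl
    · exact hzero.le.trans (hpos t ht).le
  have hmono : MonotoneOn M (Ioc 0 1) :=
    ((hconv.subset (subset_univ _) (convex_Ici 0)).monotoneOn_Ici_of_isMinOn hmin).mono
      fun _ ht => ht.1.le
  obtain ⟨C, hC⟩ := exists_le_mul_rpow_of_limsup_lt_top hp0 hmono hlimsup
  refine hsup ⟨max B (C / M a), ?_⟩
  rintro _ ⟨u, hu, v, hv, rfl⟩
  rcases le_or_gt v a with hva | hav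
  · exact le_max_of_le_left (hB ⟨u, hu, v, ⟨hv.1, hva⟩, rfl⟩)
  · exact le_max_of_le_right <|
      div_rpow_mul_le_of_le_mul_rpow hp0 hC hmono ha.1 (hpos a ha.1.ne') hu hav.le hv.2

/-- Let `M` be an Orlicz function and `p ≥ 1`.  Suppose
`limsup_{t→0⁺} M t / t^p < ∞` (in `[0,∞]`) and
`sup { M (u*v) / (u^p * M v) : u, v ∈ (0,1] } = ∞`.  Then for every `a ∈ (0,1]`,
`sup { M (u*v) / (u^p * M v) : u ∈ (0,1], v ∈ (0,a] } = ∞`. -/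
theorem orlicz_unbounded_quotient_localizes
    (M : ℝ → ℝ) (p : ℝ) (hp : 1 ≤ p)
    (hconv : ConvexOn ℝ Set.univ M)
    (heven : ∀ t : ℝ, M (-t) = M t)
    (hzero : M 0 = 0)
    (hpos : ∀ t : ℝ, t ≠ 0 → 0 < M t)
    (hlimsup : Filter.limsup (fun t : ℝ => ENNReal.ofReal (M t / t ^ p))
        (nhdsWithin 0 (Set.Ioi 0)) < ⊤)
    (hsup : ¬ BddAbove {r : ℝ | ∃ u ∈ Set.Ioc (0:ℝ) 1, ∃ v ∈ Set.Ioc (0:ℝ) 1,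
        r = M (u * v) / (u ^ p * M v)}) :
    ∀ a ∈ Set.Ioc (0:ℝ) 1,
      ¬ BddAbove {r : ℝ | ∃ u ∈ Set.Ioc (0:ℝ) 1, ∃ v ∈ Set.Ioc (0:ℝ) a,
        r = M (u * v) / (u ^ p * M v)} :=
  orlicz_unbounded_quotient_localizes_general M p hp hconv hzero hpos hlimsup hsup
end
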